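/- (Infimum over metrics equals infimum over quasi-metrics) Fix image lengths L_i ≥ 0 on the edges of a triangulated closed surface such that L_i = 0 whenever required for finiteness. For any simplicial quasi-metric l⁰ with E_S(f, l⁰) < ∞, the perturbed metrics lᵗ defined by lᵗ(e_i) = l⁰(e_i) + t for t > 0 are genuine simplicial metrics (positive, satisfying triangle inequalities), and E_S(f, lᵗ) → E_S(f, l⁰) as t → 0⁺. Consequently inf over simplicial metrics of E_S equals inf over simplicial quasi-metrics of E_S. -/

import Mathlib

/-!
Shifting a quasi-metric by `t > 0` keeps the triangle inequalities and makes every edge positive.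
Each summand of the energy, written as `L² (b + t)/(a + t) + M² (a + t)/(b + t)`, is continuous
at `t = 0` unless an edge length vanishes, and then the finiteness condition kills that term. So
every finite-energy quasi-metric is an energy limit of metrics, and the two infima agree.
-/

/-- The simplicial energy of a map with image edge lengths `L` with respect to the edge
length assignment `l` (with the convention `0/0 = 0`, valid for finite-energy maps). -/
noncomputable def simpEnergy {T ι : Type*} [Fintype T] (edges : T → Fin 3 → ι)
    (L l : ι → ℝ) : ℝ :=
  (1 / 2) * ∑ t : T,
    (((L (edges t 0)) ^ 2 / (l (edges t 0)) ^ 2 + (L (edges t 1)) ^ 2 / (l (edges t 1)) ^ 2)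
          * l (edges t 0) * l (edges t 1)
      + ((L (edges t 1)) ^ 2 / (l (edges t 1)) ^ 2 + (L (edges t 2)) ^ 2 / (l (edges t 2)) ^ 2)
          * l (edges t 1) * l (edges t 2)
      + ((L (edges t 2)) ^ 2 / (l (edges t 2)) ^ 2 + (L (edges t 0)) ^ 2 / (l (edges t 0)) ^ 2)
          * l (edges t 2) * l (edges t 0))

/-- `l` satisfies the triangle inequality in every triangle of the triangulation. -/
def triIneq {T ι : Type*} (edges : T → Fin 3 → ι) (l : ι → ℝ) : Prop :=
  ∀ t : T, l (edges t 0) ≤ l (edges t 1) + l (edges t 2)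
    ∧ l (edges t 1) ≤ l (edges t 0) + l (edges t 2)
    ∧ l (edges t 2) ≤ l (edges t 0) + l (edges t 1)

open Filter Topology

noncomputable def edgePairEnergy (L M a b : ℝ) : ℝ :=
  (L ^ 2 / a ^ 2 + M ^ 2 / b ^ 2) * a * b

lemma edgePairEnergy_nonneg (L M : ℝ) {a b : ℝ} (ha : 0 ≤ a) (hb : 0 ≤ b) :
    0 ≤ edgePairEnergy L M a b := by
  unfold edgePairEnergy
  positivity

lemma simpEnergy_eq_sum_edgePairEnergy {T ι : Type*} [Fintype T] (edges : T → Fin 3 → ι)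
    (L l : ι → ℝ) :
    simpEnergy edges L l = (1 / 2) * ∑ t : T,
      (edgePairEnergy (L (edges t 0)) (L (edges t 1)) (l (edges t 0)) (l (edges t 1))
        + edgePairEnergy (L (edges t 1)) (L (edges t 2)) (l (edges t 1)) (l (edges t 2))
        + edgePairEnergy (L (edges t 2)) (L (edges t 0)) (l (edges t 2)) (l (edges t 0))) :=
  rfl

lemma simpEnergy_nonneg {T ι : Type*} [Fintype T] (edges : T → Fin 3 → ι) (L : ι → ℝ)
    {l : ι → ℝ} (hl : ∀ i, 0 ≤ l i) : 0 ≤ simpEnergy edges L l := by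
  rw [simpEnergy_eq_sum_edgePairEnergy]
  refine mul_nonneg (by norm_num) (Finset.sum_nonneg fun t _ => ?_)
  exact add_nonneg (add_nonneg (edgePairEnergy_nonneg _ _ (hl _) (hl _))
    (edgePairEnergy_nonneg _ _ (hl _) (hl _))) (edgePairEnergy_nonneg _ _ (hl _) (hl _))

lemma tendsto_sq_mul_add_div_add (L : ℝ) {a : ℝ} (b : ℝ) (ha : 0 ≤ a) (hL : a = 0 → L = 0) :
    Tendsto (fun t : ℝ => L ^ 2 * (b + t) / (a + t)) (𝓝[>] 0)
      (𝓝 (L ^ 2 / a ^ 2 * a * b)) := by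
  rcases ha.eq_or_lt with rfl | ha
  · simp [hL rfl]
  · have hcont : ContinuousAt (fun t : ℝ => L ^ 2 * (b + t) / (a + t)) 0 :=
      ContinuousAt.div (by fun_prop) (by fun_prop) (by simpa using ha.ne')
    convert hcont.tendsto.mono_left nhdsWithin_le_nhds using 2
    field_simp
    ring

lemma tendsto_edgePairEnergy_add {L M a b : ℝ} (ha : 0 ≤ a) (hb : 0 ≤ b)
    (hL : a = 0 → L = 0) (hM : b = 0 → M = 0) :
    Tendsto (fun t : ℝ => edgePairEnergy L M (a + t) (b + t)) (𝓝[>] 0)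
      (𝓝 (edgePairEnergy L M a b)) := by
  have hsum := (tendsto_sq_mul_add_div_add L b ha hL).add (tendsto_sq_mul_add_div_add M a hb hM)
  convert hsum.congr' ?_ using 2
  · unfold edgePairEnergy
    ring
  · filter_upwards [self_mem_nhdsWithin] with t (ht : 0 < t)
    have hat : a + t ≠ 0 := by positivity
    have hbt : b + t ≠ 0 := by positivity
    unfold edgePairEnergy
    field_simp

lemma tendsto_simpEnergy_add_const {T ι : Type*} [Fintype T] (edges : T → Fin 3 → ι)
    (L : ι → ℝ) {l : ι → ℝ} (hl : ∀ i, 0 ≤ l i) (hfin : ∀ i, l i = 0 → L i = 0) :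
    Tendsto (fun t : ℝ => simpEnergy edges L (fun i => l i + t)) (𝓝[>] 0)
      (𝓝 (simpEnergy edges L l)) := by
  simp only [simpEnergy_eq_sum_edgePairEnergy]
  refine Tendsto.const_mul _ (tendsto_finsetSum _ fun t _ => ?_)
  exact ((tendsto_edgePairEnergy_add (hl _) (hl _) (hfin _) (hfin _)).add
    (tendsto_edgePairEnergy_add (hl _) (hl _) (hfin _) (hfin _))).add
    (tendsto_edgePairEnergy_add (hl _) (hl _) (hfin _) (hfin _))

lemma triIneq_add_const {T ι : Type*} {edges : T → Fin 3 → ι} {l : ι → ℝ}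
    (h : triIneq edges l) {t : ℝ} (ht : 0 ≤ t) : triIneq edges (fun i => l i + t) := by
  intro τ
  obtain ⟨h₀, h₁, h₂⟩ := h τ
  exact ⟨by linarith, by linarith, by linarith⟩

lemma isMetric_add_const {T ι : Type*} {edges : T → Fin 3 → ι} {l : ι → ℝ}
    (hl : ∀ i, 0 ≤ l i) (htri : triIneq edges l) {t : ℝ} (ht : 0 < t) :
    (∀ i, 0 < l i + t) ∧ triIneq edges (fun i => l i + t) :=
  ⟨fun i => add_pos_of_nonneg_of_pos (hl i) ht, triIneq_add_const htri ht.le⟩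

theorem inf_energy_metrics_eq_inf_quasimetrics_general {T ι : Type*} [Fintype T]
    (edges : T → Fin 3 → ι)
    (L : ι → ℝ)
    (l0 : ι → ℝ) (hl0 : ∀ i, 0 ≤ l0 i) (htri0 : triIneq edges l0)
    (hfin : ∀ i, l0 i = 0 → L i = 0) :
    (∀ t : ℝ, 0 < t → (∀ i, 0 < l0 i + t) ∧ triIneq edges (fun i => l0 i + t)) ∧
    Filter.Tendsto (fun t : ℝ => simpEnergy edges L (fun i => l0 i + t))
      (nhdsWithin 0 (Set.Ioi 0)) (nhds (simpEnergy edges L l0)) ∧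
    sInf {x : ℝ | ∃ l : ι → ℝ, (∀ i, 0 < l i) ∧ triIneq edges l
          ∧ x = simpEnergy edges L l}
      = sInf {x : ℝ | ∃ l : ι → ℝ, (∀ i, 0 ≤ l i) ∧ triIneq edges l
          ∧ (∀ i, l i = 0 → L i = 0) ∧ x = simpEnergy edges L l} := by
  refine ⟨fun t => isMetric_add_const hl0 htri0, tendsto_simpEnergy_add_const edges L hl0 hfin, ?_⟩
  set metrics := {x : ℝ | ∃ l : ι → ℝ, (∀ i, 0 < l i) ∧ triIneq edges l
      ∧ x = simpEnergy edges L l}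
  set quasimetrics := {x : ℝ | ∃ l : ι → ℝ, (∀ i, 0 ≤ l i) ∧ triIneq edges l
      ∧ (∀ i, l i = 0 → L i = 0) ∧ x = simpEnergy edges L l}
  have hsub : metrics ⊆ quasimetrics := by
    rintro x ⟨l, hl, htri, rfl⟩
    exact ⟨l, fun i => (hl i).le, htri, fun i hi => absurd hi (hl i).ne', rfl⟩
  have hbdd : BddBelow quasimetrics := ⟨0, by
    rintro x ⟨l, hl, -, -, rfl⟩
    exact simpEnergy_nonneg edges L hl⟩
  have hne : metrics.Nonempty := ⟨_, fun _ => 1, fun _ => one_pos, fun _ => by norm_num, rfl⟩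
  refine le_antisymm (le_csInf (hne.mono hsub) ?_) (csInf_le_csInf hbdd hne hsub)
  rintro x ⟨l, hl, htri, hfin, rfl⟩
  refine ge_of_tendsto (tendsto_simpEnergy_add_const edges L hl hfin) ?_
  filter_upwards [self_mem_nhdsWithin] with t (ht : 0 < t)
  obtain ⟨hpos, htri'⟩ := isMetric_add_const hl htri ht
  exact csInf_le (hbdd.mono hsub) ⟨_, hpos, htri', rfl⟩

/-- For any finite-energy simplicial quasi-metric `l⁰`, the perturbations
`lᵗ = l⁰ + t` (`t > 0`) are genuine simplicial metrics, and `E_S(f, lᵗ) → E_S(f, l⁰)` as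
`t → 0⁺`. Consequently the infimum of the simplicial energy over simplicial metrics
equals the infimum over finite-energy simplicial quasi-metrics. -/
theorem inf_energy_metrics_eq_inf_quasimetrics {T ι : Type*} [Fintype T]
    (edges : T → Fin 3 → ι)
    (L : ι → ℝ) (hL : ∀ i, 0 ≤ L i)
    (l0 : ι → ℝ) (hl0 : ∀ i, 0 ≤ l0 i) (htri0 : triIneq edges l0)
    (hfin : ∀ i, l0 i = 0 → L i = 0) :
    (∀ t : ℝ, 0 < t → (∀ i, 0 < l0 i + t) ∧ triIneq edges (fun i => l0 i + t)) ∧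
    Filter.Tendsto (fun t : ℝ => simpEnergy edges L (fun i => l0 i + t))
      (nhdsWithin 0 (Set.Ioi 0)) (nhds (simpEnergy edges L l0)) ∧
    sInf {x : ℝ | ∃ l : ι → ℝ, (∀ i, 0 < l i) ∧ triIneq edges l
          ∧ x = simpEnergy edges L l}
      = sInf {x : ℝ | ∃ l : ι → ℝ, (∀ i, 0 ≤ l i) ∧ triIneq edges l
          ∧ (∀ i, l i = 0 → L i = 0) ∧ x = simpEnergy edges L l} :=
  inf_energy_metrics_eq_inf_quasimetrics_general edges L l0 hl0 htri0 hfin
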